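/- The brackets {ζ₁,ζ₂}=ζ₁ζ₂, {ζ₁,ζ₁*}=2(1+|ζ₁|²), {ζ₁,ζ₂*}=ζ₁ζ₂*, {ζ₂,ζ₂*}=-2(1+|ζ₁|²+|ζ₂|²) define a Poisson structure on ℝ⁴ ≅ ℂ² whose associated bivector is everywhere nondegenerate (i.e. the structure is symplectic). -/

import Mathlib

/-!
The Jacobiator of a bracket that is antisymmetric and a derivation in each argument is itself a
derivation in each argument, so on a polynomial algebra it vanishes identically as soon as it
vanishes on triples of generators; for the four coordinates this is a finite computation.
Nondegeneracy: the matrix of brackets of the coordinates has Pfaffian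
`4 (1 + |ζ₁|²) (1 + |ζ₁|² + |ζ₂|²)`, which never vanishes.
-/

open MvPolynomial

namespace MvPolynomial

variable {R σ : Type*} [CommRing R]

noncomputable def jacobiator (B : MvPolynomial σ R →ₗ[R] MvPolynomial σ R →ₗ[R] MvPolynomial σ R)
    (f g h : MvPolynomial σ R) : MvPolynomial σ R :=
  B f (B g h) + B g (B h f) + B h (B f g)

section Bracket

variable {B : MvPolynomial σ R →ₗ[R] MvPolynomial σ R →ₗ[R] MvPolynomial σ R}

theorem jacobiator_rotate (f g h : MvPolynomial σ R) :
    jacobiator B f g h = jacobiator B g h f := by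
  simp only [jacobiator]; ring

theorem jacobiator_add_left (f₁ f₂ g h : MvPolynomial σ R) :
    jacobiator B (f₁ + f₂) g h = jacobiator B f₁ g h + jacobiator B f₂ g h := by
  simp only [jacobiator, map_add, LinearMap.add_apply]; ring

variable (hA : ∀ f g, B f g = -B g f) (hL : ∀ f g h, B (f * g) h = f * B g h + B f h * g)
include hA hL

theorem bracket_mul_right (f g h : MvPolynomial σ R) : B f (g * h) = g * B f h + B f g * h := by
  rw [hA f (g * h), hL, hA h f, hA g f]; ring

omit hA in
theorem bracket_C_left (c : R) (h : MvPolynomial σ R) : B (C c) h = 0 := by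
  have hB1 : B 1 h = 0 := by simpa using hL 1 1 h
  rw [← mul_one (C c), ← smul_eq_C_mul, map_smul, LinearMap.smul_apply, hB1, smul_zero]

theorem bracket_C_right (c : R) (h : MvPolynomial σ R) : B h (C c) = 0 := by
  rw [hA, bracket_C_left hL, neg_zero]

theorem jacobiator_C_left (c : R) (g h : MvPolynomial σ R) : jacobiator B (C c) g h = 0 := by
  simp only [jacobiator, bracket_C_left hL, bracket_C_right hA hL, map_zero, add_zero]

theorem jacobiator_mul_left (a b g h : MvPolynomial σ R) :
    jacobiator B (a * b) g h = a * jacobiator B b g h + jacobiator B a g h * b := by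
  have hR := bracket_mul_right hA hL
  simp only [jacobiator]
  rw [hA h (a * b)]
  simp only [hL, hR, map_neg, map_add, hA b h, hA a h, hA a g, hA b g]
  ring

theorem jacobiator_eq_zero_of_X_left {g h : MvPolynomial σ R}
    (hX : ∀ u, jacobiator B (X u) g h = 0) (f : MvPolynomial σ R) : jacobiator B f g h = 0 := by
  induction f using MvPolynomial.induction_on with
  | C c => exact jacobiator_C_left hA hL c g h
  | add p q hp hq => rw [jacobiator_add_left, hp, hq, add_zero]
  | mul_X p u hp => rw [jacobiator_mul_left hA hL, hp, hX, mul_zero, zero_mul, add_zero]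

theorem jacobiator_eq_zero_of_X (hX : ∀ u v w, jacobiator B (X u) (X v) (X w) = 0)
    (f g h : MvPolynomial σ R) : jacobiator B f g h = 0 := by
  have h₁ (f : MvPolynomial σ R) (v w) : jacobiator B f (X v) (X w) = 0 :=
    jacobiator_eq_zero_of_X_left hA hL (hX · v w) f
  have h₂ (g f : MvPolynomial σ R) (w) : jacobiator B g (X w) f = 0 :=
    jacobiator_eq_zero_of_X_left hA hL (fun v => by rw [← jacobiator_rotate, h₁]) g
  exact jacobiator_eq_zero_of_X_left hA hL (fun w => by rw [← jacobiator_rotate, h₂]) f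

end Bracket

end MvPolynomial

section Stereographic

open Sum

theorem stereographic_jacobiator_X
    {B : MvPolynomial (Fin 2 ⊕ Fin 2) ℂ →ₗ[ℂ]
      MvPolynomial (Fin 2 ⊕ Fin 2) ℂ →ₗ[ℂ] MvPolynomial (Fin 2 ⊕ Fin 2) ℂ}
    (hA : ∀ f g, B f g = -B g f) (hL : ∀ f g h, B (f * g) h = f * B g h + B f h * g)
    (e01 : B (X (inl 0)) (X (inl 1)) = X (inl 0) * X (inl 1))
    (e02 : B (X (inl 0)) (X (inr 0)) = 2 * (1 + X (inl 0) * X (inr 0)))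
    (e03 : B (X (inl 0)) (X (inr 1)) = X (inl 0) * X (inr 1))
    (e13 : B (X (inl 1)) (X (inr 1)) = -(2 * (1 + X (inl 0) * X (inr 0) + X (inl 1) * X (inr 1))))
    (e23 : B (X (inr 0)) (X (inr 1)) = -(X (inr 0) * X (inr 1)))
    (e12 : B (X (inl 1)) (X (inr 0)) = X (inr 0) * X (inl 1))
    (u v w : Fin 2 ⊕ Fin 2) : jacobiator B (X u) (X v) (X w) = 0 := by
  have hdiag (f) : B f f = 0 := self_eq_neg.mp (hA f f)
  have hR := bracket_mul_right hA hL
  have hone (f) : B f 1 = 0 := by rw [← C_1]; exact bracket_C_right hA hL 1 f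
  have htwo (f) : B f 2 = 0 := by rw [← map_ofNat C 2]; exact bracket_C_right hA hL 2 f
  have e10 := (hA _ _).trans (congrArg Neg.neg e01)
  have e20 := (hA _ _).trans (congrArg Neg.neg e02)
  have e30 := (hA _ _).trans (congrArg Neg.neg e03)
  have e31 := (hA _ _).trans (congrArg Neg.neg e13)
  have e32 := (hA _ _).trans (congrArg Neg.neg e23)
  have e21 := (hA _ _).trans (congrArg Neg.neg e12)
  rcases u with u | u <;> rcases v with v | v <;> rcases w with w | w <;>
    fin_cases u <;> fin_cases v <;> fin_cases w <;>
    · simp only [jacobiator, Fin.zero_eta, Fin.mk_one, hdiag, e01, e02, e03, e13, e23, e12, e10,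
        e20, e30, e31, e32, e21, hR, map_add, map_neg, map_zero, hone, htwo]
      ring

theorem det_stereographic_bivector {R : Type*} [CommRing R] (a b c d : R) :
    (!![0, a * b, 2 * (1 + a * c), a * d;
        -(a * b), 0, c * b, -(2 * (1 + a * c + b * d));
        -(2 * (1 + a * c)), -(c * b), 0, -(c * d);
        -(a * d), 2 * (1 + a * c + b * d), c * d, 0] : Matrix (Fin 4) (Fin 4) R).det
      = 16 * (1 + a * c) ^ 2 * (1 + a * c + b * d) ^ 2 := by
  rw [Matrix.det_succ_row_zero, Fin.sum_univ_four]
  simp only [Matrix.det_fin_three, Matrix.submatrix_apply, Matrix.of_apply, Matrix.cons_val',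
    Matrix.cons_val, Matrix.cons_val_fin_one, Fin.succAbove, Fin.reduceLT, Fin.reduceCastSucc,
    Fin.reduceSucc, Fin.isValue, ↓reduceIte, Fin.coe_ofNat_eq_mod]
  ring

end Stereographic

/-- The brackets `{ζ₁,ζ₂}=ζ₁ζ₂`, `{ζ₁,ζ₁*}=2(1+|ζ₁|²)`, `{ζ₁,ζ₂*}=ζ₁ζ₂*`,
`{ζ₂,ζ₂*}=-2(1+|ζ₁|²+|ζ₂|²)` (extended by Leibniz, antisymmetry and the reality
condition `{f*,g*} = -{f,g}*`) define a Poisson structure on ℝ⁴ ≅ ℂ²: the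
bracket satisfies the Jacobi identity, and the associated bivector, i.e. the
matrix of brackets of the coordinates `(ζ₁,ζ₂,ζ₁*,ζ₂*)`, is everywhere
nondegenerate, so the structure is symplectic. -/
theorem stereographic_poisson_symplectic :
    (∀ (B : MvPolynomial (Fin 2 ⊕ Fin 2) ℂ →ₗ[ℂ]
            MvPolynomial (Fin 2 ⊕ Fin 2) ℂ →ₗ[ℂ] MvPolynomial (Fin 2 ⊕ Fin 2) ℂ)
       (z w : Fin 2 → MvPolynomial (Fin 2 ⊕ Fin 2) ℂ),
      (∀ i, z i = MvPolynomial.X (Sum.inl i)) →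
      (∀ i, w i = MvPolynomial.X (Sum.inr i)) →
      (∀ f g, B f g = - B g f) →
      (∀ f g h, B (f * g) h = f * B g h + B f h * g) →
      B (z 0) (z 1) = z 0 * z 1 →
      B (z 0) (w 0) = 2 * (1 + z 0 * w 0) →
      B (z 0) (w 1) = z 0 * w 1 →
      B (z 1) (w 1) = -(2 * (1 + z 0 * w 0 + z 1 * w 1)) →
      B (w 0) (w 1) = -(w 0 * w 1) →
      B (z 1) (w 0) = w 0 * z 1 →
      ∀ f g h, B f (B g h) + B g (B h f) + B h (B f g) = 0) ∧
    (∀ ζ₁ ζ₂ : ℂ,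
      (!![0, ζ₁ * ζ₂, 2 * (1 + ζ₁ * star ζ₁), ζ₁ * star ζ₂;
          -(ζ₁ * ζ₂), 0, star ζ₁ * ζ₂, -(2 * (1 + ζ₁ * star ζ₁ + ζ₂ * star ζ₂));
          -(2 * (1 + ζ₁ * star ζ₁)), -(star ζ₁ * ζ₂), 0, -(star ζ₁ * star ζ₂);
          -(ζ₁ * star ζ₂), 2 * (1 + ζ₁ * star ζ₁ + ζ₂ * star ζ₂), star ζ₁ * star ζ₂, 0]
        : Matrix (Fin 4) (Fin 4) ℂ).det ≠ 0) := by
  refine ⟨fun B z w hz hw hA hL e01 e02 e03 e13 e23 e12 => ?_, fun ζ₁ ζ₂ => ?_⟩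
  · simp only [hz, hw] at e01 e02 e03 e13 e23 e12
    exact jacobiator_eq_zero_of_X hA hL
      (stereographic_jacobiator_X hA hL e01 e02 e03 e13 e23 e12)
  · rw [det_stereographic_bivector, Complex.star_def, Complex.mul_conj', Complex.mul_conj']
    exact_mod_cast (by positivity : (16 * (1 + ‖ζ₁‖ ^ 2) ^ 2 * (1 + ‖ζ₁‖ ^ 2 + ‖ζ₂‖ ^ 2) ^ 2 : ℝ) ≠ 0)
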